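/- Let n ≥ 2 and 1 ≤ k ≤ 2^{n−1}. Then the encoded vertex v^n(k) satisfies 2^{C(n−1,2)} · (k − 1) ≤ v^n(k) < 2^{C(n−1,2)} · k, where C(n−1,2) = (n−1)(n−2)/2; equivalently, k − 1 ≤ v^n(k) / 2^{C(n−1,2)} < k. -/

import Mathlib

/-!
Write `2 ^ (n - 1) + k - 1 = 2 ^ m + c` with `m = n - 1`, `c = k - 1 < 2 ^ m`. Its `n`-bit
representation is `true :: y` with `code y = c`, and since `(true == b) = b`,
`λ(true :: y) = y ++ λ(y)`. Hence `v n k = c * 2 ^ C(m, 2) + code (λ y)`, where the second summand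
is the code of a list of length `C(m, 2)`, so lies in `[0, 2 ^ C(m, 2))`.
-/

/-- Integer encoding of a binary vector (MSB first): code(x) = Σ x_j 2^(m-j). -/
def code (x : List Bool) : ℕ := x.foldl (fun a b => 2 * a + (if b then 1 else 0)) 0

/-- m-bit binary representation (MSB first) of an integer k. -/
def decode (m k : ℕ) : List Bool := (List.range m).map (fun j => k.testBit (m - 1 - j))

/-- Agreement-indicator map: λ(x) lists 𝟙(x_i = x_j) for pairs i < j in lex order. -/
def lam : List Bool → List Bool
  | [] => []
  | a :: t => (t.map (fun b => a == b)) ++ lam t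

/-- Integer-level map λ#_n. -/
def lambdaSharp (n k : ℕ) : ℕ := code (lam (decode n k))

/-- Encoded vertices of 𝟙-CUT(n): v^n(k) = λ#_n(2^(n-1) + k - 1). -/
def v (n k : ℕ) : ℕ := lambdaSharp n (2 ^ (n - 1) + k - 1)

lemma foldl_code_step (x : List Bool) (a : ℕ) :
    x.foldl (fun a b => 2 * a + (if b then 1 else 0)) a = a * 2 ^ x.length + code x := by
  induction x generalizing a with
  | nil => simp [code]
  | cons b t ih =>
    rw [code, List.foldl_cons, List.foldl_cons, ih, ih, List.length_cons]
    ring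

lemma code_append (x y : List Bool) : code (x ++ y) = code x * 2 ^ y.length + code y := by
  rw [code, List.foldl_append, foldl_code_step]
  rfl

lemma code_cons (b : Bool) (t : List Bool) : code (b :: t) = b.toNat * 2 ^ t.length + code t := by
  rw [← List.singleton_append, code_append]
  cases b <;> rfl

lemma code_lt_two_pow_length (x : List Bool) : code x < 2 ^ x.length := by
  induction x with
  | nil => simp [code]
  | cons b t ih =>
    rw [code_cons, List.length_cons, pow_succ]
    cases b <;> simp only [Bool.toNat_true, Bool.toNat_false] <;> omega

@[simp]
lemma length_decode (m j : ℕ) : (decode m j).length = m := by simp [decode]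

lemma decode_succ (m j : ℕ) : decode (m + 1) j = j.testBit m :: decode m j := by
  rw [decode, List.range_succ_eq_map, List.map_cons, List.map_map]
  congr 1
  exact List.map_congr_left fun i _ => by simp only [Function.comp_apply]; congr 1; omega

lemma code_decode (m j : ℕ) : code (decode m j) = j % 2 ^ m := by
  induction m with
  | zero => simp [decode, code, Nat.mod_one]
  | succ m ih =>
    rw [decode_succ, code_cons, length_decode, ih, Nat.mod_pow_succ, Nat.toNat_testBit]
    ring

lemma decode_two_pow_add (m j : ℕ) : decode m (2 ^ m + j) = decode m j :=
  List.map_congr_left fun i hi =>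
    Nat.testBit_two_pow_add_gt (by simp only [List.mem_range] at hi; omega) j

lemma decode_succ_two_pow_add {m c : ℕ} (hc : c < 2 ^ m) :
    decode (m + 1) (2 ^ m + c) = true :: decode m c := by
  rw [decode_succ, Nat.testBit_two_pow_add_eq, Nat.testBit_lt_two_pow hc, decode_two_pow_add]
  rfl

lemma length_lam (x : List Bool) : (lam x).length = x.length.choose 2 := by
  induction x with
  | nil => rfl
  | cons a t ih => simp [lam, ih, Nat.choose_succ_succ]

lemma lam_true_cons (x : List Bool) : lam (true :: x) = x ++ lam x := by
  simp [lam]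

lemma lambdaSharp_succ_two_pow_add {m c : ℕ} (hc : c < 2 ^ m) :
    lambdaSharp (m + 1) (2 ^ m + c) = c * 2 ^ m.choose 2 + code (lam (decode m c)) := by
  rw [lambdaSharp, decode_succ_two_pow_add hc, lam_true_cons, code_append, length_lam,
    length_decode, code_decode, Nat.mod_eq_of_lt hc]

theorem stmt_6 (n : ℕ) (hn : 2 ≤ n) (k : ℕ) (hk : 1 ≤ k) (hk2 : k ≤ 2 ^ (n - 1)) :
    2 ^ Nat.choose (n - 1) 2 * (k - 1) ≤ v n k ∧ v n k < 2 ^ Nat.choose (n - 1) 2 * k := by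
  obtain ⟨m, rfl⟩ : ∃ m, n = m + 1 := ⟨n - 1, by omega⟩
  obtain ⟨c, rfl⟩ : ∃ c, k = c + 1 := ⟨k - 1, by omega⟩
  simp only [Nat.add_sub_cancel] at hk2 ⊢
  have hv : v (m + 1) (c + 1) = c * 2 ^ m.choose 2 + code (lam (decode m c)) := by
    rw [v, Nat.add_sub_cancel, ← Nat.add_assoc, Nat.add_sub_cancel,
      lambdaSharp_succ_two_pow_add (by omega)]
  have hlam : code (lam (decode m c)) < 2 ^ m.choose 2 := by
    simpa [length_lam] using code_lt_two_pow_length (lam (decode m c))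
  rw [hv]
  constructor <;> nlinarith
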